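/- Let d ≥ 1 and n ≥ 2, and let T : (Fin(n+1) → Fin d) → ℝ be a covariant (n+1)-tensor satisfying the K-condition of degree n (antisymmetric in its first n indices, with vanishing full antisymmetrization over all n+1 indices). Then φ(T), defined by φ(T)(μ_1,…,μ_{n−1},ν,λ) = ½(T(μ_1,…,μ_{n−1},ν,λ) + T(μ_1,…,μ_{n−1},λ,ν)), satisfies the G-condition of degree n: φ(T) is antisymmetric in its first n−1 indices, symmetric in its last two indices, and satisfies the cyclic relation Σ_{i=0}^{n} (−1)^{i·n} φ(T)(μ_{τ^i(1)}, …, μ_{τ^i(n+1)}) = 0 for every multi-index μ, where τ is the cyclic permutation of the n+1 index slots. -/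

import Mathlib

/-- The sign of a permutation, as a real number. -/
def sgn {n : ℕ} (σ : Equiv.Perm (Fin n)) : ℝ := ((Equiv.Perm.sign σ : ℤ) : ℝ)

/-- The K-condition of degree `n` for a covariant `(n+1)`-tensor: antisymmetry in the first
`n` indices (`T(μ∘σ) = sign σ · T μ` for every permutation `σ` fixing the last slot) together
with vanishing full antisymmetrization over all `n+1` indices. -/
def KCond {d n : ℕ} (T : (Fin (n + 1) → Fin d) → ℝ) : Prop :=
  (∀ σ : Equiv.Perm (Fin (n + 1)), σ (Fin.last n) = Fin.last n →
    ∀ μ : Fin (n + 1) → Fin d, T (fun i => μ (σ i)) = sgn σ * T μ) ∧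
  (∀ μ : Fin (n + 1) → Fin d,
    ∑ σ : Equiv.Perm (Fin (n + 1)), sgn σ * T (fun i => μ (σ i)) = 0)

/-- The G-condition of degree `n` for a covariant `(n+1)`-tensor: antisymmetry in the first
`n−1` indices (permutations fixing the last two slots), symmetry in the last two indices, and
the cyclic relation `∑_{i=0}^{n} (−1)^{i·n} S(μ ∘ τ^i) = 0`, where `τ` is the cyclic
permutation of the `n+1` index slots. -/
def GCond {d n : ℕ} (S : (Fin (n + 1) → Fin d) → ℝ) : Prop :=
  (∀ σ : Equiv.Perm (Fin (n + 1)), σ (Fin.last n) = Fin.last n →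
    σ ⟨n - 1, by omega⟩ = ⟨n - 1, by omega⟩ →
    ∀ μ : Fin (n + 1) → Fin d, S (fun i => μ (σ i)) = sgn σ * S μ) ∧
  (∀ μ : Fin (n + 1) → Fin d,
    S (μ ∘ Equiv.swap (⟨n - 1, by omega⟩ : Fin (n + 1)) (Fin.last n)) = S μ) ∧
  (∀ μ : Fin (n + 1) → Fin d,
    ∑ i ∈ Finset.range (n + 1),
      (-1 : ℝ) ^ (i * n) * S (fun j => μ ((finRotate (n + 1) ^ i) j)) = 0)

/-- The map `φ`, symmetrizing the last two indices of an `(n+1)`-tensor. -/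
noncomputable def phi {d n : ℕ} (T : (Fin (n + 1) → Fin d) → ℝ) : (Fin (n + 1) → Fin d) → ℝ :=
  fun w => (1 / 2 : ℝ) *
    (T w + T (w ∘ Equiv.swap (⟨n - 1, by omega⟩ : Fin (n + 1)) (Fin.last n)))

/-!
The symmetry conditions on `φ(T)` are immediate. For the cyclic relation, let `H` be the
stabilizer of the last slot and `c` the rotation of the slots. By antisymmetry of `T` in its first
`n` slots, `h σ := sign σ · T(μ ∘ σ)` is constant on each left coset `σH`, i.e. it depends only on
`σ(last)`. Since `c^k σ (last)`, `k = 0, …, n`, runs once through all slots, the rotation sum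
`∑ₖ h(c^k σ)` does not depend on `σ`; summing it over all `σ` gives `(n+1)` times the full
antisymmetrization, which vanishes, so `∑ₖ h(c^k ρ) = 0` for every `ρ`. As `sign (c^k) = (-1)^(k n)`,
the cyclic relation for `φ(T)` is the average of the cases `ρ = 1` and `ρ = swap (n-1) n`.
-/

open Equiv Finset

section CosetSum

open Fin.NatCast

theorem finRotate_pow_apply (m k : ℕ) (x : Fin (m + 1)) :
    (finRotate (m + 1) ^ k) x = x + (k : Fin (m + 1)) := by
  induction k with
  | zero => simp
  | succ k ih =>
    rw [pow_succ', Perm.mul_apply, finRotate_apply, ih]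
    push_cast
    abel

theorem sum_range_finRotate_pow_apply {M : Type*} [AddCommMonoid M] {m : ℕ}
    (f : Fin (m + 1) → M) (x : Fin (m + 1)) :
    ∑ k ∈ range (m + 1), f ((finRotate (m + 1) ^ k) x) = ∑ y, f y := by
  rw [← Fin.sum_univ_eq_sum_range (fun k => f ((finRotate (m + 1) ^ k) x))]
  simp only [finRotate_pow_apply, Fin.cast_val_eq_self]
  exact Equiv.sum_comp (Equiv.addLeft x) f

variable {M : Type*} {m : ℕ} {h : Perm (Fin (m + 1)) → M}

theorem apply_eq_of_apply_last_eq
    (hh : ∀ σ τ : Perm (Fin (m + 1)), τ (Fin.last m) = Fin.last m → h (σ * τ) = h σ)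
    {σ σ' : Perm (Fin (m + 1))} (hσ : σ (Fin.last m) = σ' (Fin.last m)) : h σ' = h σ := by
  simpa using hh σ (σ⁻¹ * σ') (by simp [← hσ])

variable [AddCommMonoid M]

theorem sum_range_finRotate_pow_mul
    (hh : ∀ σ τ : Perm (Fin (m + 1)), τ (Fin.last m) = Fin.last m → h (σ * τ) = h σ)
    (σ : Perm (Fin (m + 1))) :
    ∑ k ∈ range (m + 1), h (finRotate (m + 1) ^ k * σ) = ∑ y, h (swap (Fin.last m) y) := by
  rw [← sum_range_finRotate_pow_apply (fun y => h (swap (Fin.last m) y)) (σ (Fin.last m))]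
  refine sum_congr rfl fun k _ => apply_eq_of_apply_last_eq hh ?_
  simp

theorem sum_range_finRotate_pow_mul_eq_zero_of_sum_eq_zero [IsAddTorsionFree M]
    (hh : ∀ σ τ : Perm (Fin (m + 1)), τ (Fin.last m) = Fin.last m → h (σ * τ) = h σ)
    (hsum : ∑ σ, h σ = 0) (ρ : Perm (Fin (m + 1))) :
    ∑ k ∈ range (m + 1), h (finRotate (m + 1) ^ k * ρ) = 0 := by
  have hdouble : ∑ σ, ∑ k ∈ range (m + 1), h (finRotate (m + 1) ^ k * σ) = 0 := by
    rw [sum_comm]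
    refine sum_eq_zero fun k _ => ?_
    rw [← hsum]
    exact Equiv.sum_comp (Equiv.mulLeft _) h
  simp only [sum_range_finRotate_pow_mul hh, sum_const, card_univ] at hdouble
  rw [sum_range_finRotate_pow_mul hh]
  exact (smul_eq_zero.mp hdouble).resolve_left Fintype.card_ne_zero

end CosetSum

theorem sgn_mul {m : ℕ} (σ τ : Perm (Fin m)) : sgn (σ * τ) = sgn σ * sgn τ := by
  simp [sgn]

theorem sgn_mul_self {m : ℕ} (σ : Perm (Fin m)) : sgn σ * sgn σ = 1 := by
  simp [sgn, ← Int.cast_mul, ← Units.val_mul]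

theorem sgn_finRotate_pow (n k : ℕ) : sgn (finRotate (n + 1) ^ k) = (-1) ^ (k * n) := by
  simp [sgn, ← pow_mul, mul_comm]

theorem KCond.sum_range_finRotate_pow_mul_eq_zero {d n : ℕ} {T : (Fin (n + 1) → Fin d) → ℝ}
    (hT : KCond T) (ρ : Perm (Fin (n + 1))) (μ : Fin (n + 1) → Fin d) :
    ∑ k ∈ range (n + 1), (-1) ^ (k * n) * T (fun j => μ ((finRotate (n + 1) ^ k * ρ) j)) = 0 := by
  have hinv : ∀ σ τ : Perm (Fin (n + 1)), τ (Fin.last n) = Fin.last n →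
      sgn (σ * τ) * T (fun j => μ ((σ * τ) j)) = sgn σ * T (fun j => μ (σ j)) := by
    intro σ τ hτ
    rw [sgn_mul]
    change sgn σ * sgn τ * T (fun j => μ (σ (τ j))) = _
    rw [hT.1 τ hτ (fun j => μ (σ j)), mul_assoc, ← mul_assoc (sgn τ), sgn_mul_self,
      one_mul]
  have h := sum_range_finRotate_pow_mul_eq_zero_of_sum_eq_zero hinv (hT.2 μ) ρ
  simp only [sgn_mul, sgn_finRotate_pow, mul_assoc, mul_left_comm _ (sgn ρ), ← mul_sum] at h
  exact (mul_eq_zero.mp h).resolve_left (left_ne_zero_of_mul_eq_one (sgn_mul_self ρ))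

section Phi

variable {d n : ℕ} {T : (Fin (n + 1) → Fin d) → ℝ}

theorem phi_comp_swap (μ : Fin (n + 1) → Fin d) :
    phi T (μ ∘ swap (⟨n - 1, by omega⟩ : Fin (n + 1)) (Fin.last n)) = phi T μ := by
  set s := swap (⟨n - 1, by omega⟩ : Fin (n + 1)) (Fin.last n) with hs
  have hss : μ ∘ s ∘ s = μ := by
    rw [← Perm.coe_mul, hs, swap_mul_self, Perm.coe_one, Function.comp_id]
  simp only [phi, ← hs, Function.comp_assoc, hss]
  ring

theorem KCond.phi_comp_perm (hT : KCond T) (σ : Perm (Fin (n + 1)))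
    (hσl : σ (Fin.last n) = Fin.last n) (hσp : σ ⟨n - 1, by omega⟩ = ⟨n - 1, by omega⟩)
    (μ : Fin (n + 1) → Fin d) :
    phi T (fun i => μ (σ i)) = sgn σ * phi T μ := by
  set s := swap (⟨n - 1, by omega⟩ : Fin (n + 1)) (Fin.last n) with hs
  have hcomm : σ * s = s * σ := by
    rw [hs]
    nth_rw 2 [← hσp, ← hσl]
    rw [swap_apply_apply, inv_mul_cancel_right]
  have hσs : (fun i => μ (σ i)) ∘ s = fun i => (μ ∘ s) (σ i) :=
    funext fun i => congrArg μ (Perm.ext_iff.mp hcomm i)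
  simp only [phi, ← hs, hσs, hT.1 σ hσl]
  ring

theorem KCond.sum_range_phi_finRotate_pow_eq_zero (hT : KCond T) (μ : Fin (n + 1) → Fin d) :
    ∑ k ∈ range (n + 1), (-1) ^ (k * n) * phi T (fun j => μ ((finRotate (n + 1) ^ k) j)) = 0 := by
  set s := swap (⟨n - 1, by omega⟩ : Fin (n + 1)) (Fin.last n)
  have hterm : ∀ k, (-1) ^ (k * n) * phi T (fun j => μ ((finRotate (n + 1) ^ k) j)) =
      1 / 2 * ((-1) ^ (k * n) * T (fun j => μ ((finRotate (n + 1) ^ k * 1) j))) +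
        1 / 2 * ((-1) ^ (k * n) * T (fun j => μ ((finRotate (n + 1) ^ k * s) j))) := fun k => by
    rw [mul_one]
    change _ * (1 / 2 * (_ + T (fun j => μ ((finRotate (n + 1) ^ k * s) j)))) = _
    ring
  rw [sum_congr rfl fun k _ => hterm k, sum_add_distrib, ← mul_sum, ← mul_sum,
    hT.sum_range_finRotate_pow_mul_eq_zero 1 μ, hT.sum_range_finRotate_pow_mul_eq_zero s μ]
  ring

end Phi

theorem stmt6_general (d n : ℕ)
    (T : (Fin (n + 1) → Fin d) → ℝ) (hT : KCond T) :
    GCond (phi T) :=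
  ⟨hT.phi_comp_perm, phi_comp_swap, hT.sum_range_phi_finRotate_pow_eq_zero⟩

/-- (Well-definedness of `φ : K^n(M) → G^n(M)`.)  Let `d ≥ 1`, `n ≥ 2`, and
let `T : (Fin (n+1) → Fin d) → ℝ` satisfy the K-condition of degree `n`.  Then `φ(T)`, which
symmetrizes the last two indices of `T`, satisfies the G-condition of degree `n`. -/
theorem stmt6 (d n : ℕ) (hd : 1 ≤ d) (hn : 2 ≤ n)
    (T : (Fin (n + 1) → Fin d) → ℝ) (hT : KCond T) :
    GCond (phi T) :=
  stmt6_general d n T hT
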